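/- In any Poisson H-pseudoalgebra V, the right Leibniz rule holds: [ab ∗ c] = a[b ∗ c] + (-1)^{p(a)p(b)} b[a ∗ c], where for [b ∗ c] = Σ_i (h_i ⊗ l_i) ⊗_H d_i one defines a[b ∗ c] := Σ_i (h_{i(1)} ⊗ l_i) ⊗_H (S(h_{i(2)})a) d_i. -/

import Mathlib

open TensorProduct

noncomputable section

variable (F : Type*) [Field F] [CharZero F]
variable (H : Type*) [Ring H] [HopfAlgebra F H]
variable (V : Type*) [NonUnitalRing V] [Module F V] [Module H V]
  [IsScalarTower F H V] [SMulCommClass F H V]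
  [IsScalarTower F V V] [SMulCommClass F V V]

/-- action of `H` on `V` as a bilinear map -/
def hAct : H →ₗ[F] V →ₗ[F] V :=
  LinearMap.mk₂ F (· • ·) (fun h h' v => add_smul h h' v)
    (fun r h v => smul_assoc r h v) (fun h v v' => smul_add h v v')
    (fun r h v => (smul_comm r h v).symm)

/-- the balancing submodule defining `(H ⊗ H) ⊗_H V`, where `H` acts on `H ⊗ H`
on the right via the coproduct. -/
def relSub : Submodule F ((H ⊗[F] H) ⊗[F] V) :=
  Submodule.span F
    {x | ∃ (w : H ⊗[F] H) (h : H) (v : V),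
      x = (w * Coalgebra.comul h) ⊗ₜ[F] v - w ⊗ₜ[F] (h • v)}

/-- `k ⊗ e ↦ e * (S(k) • c)` -/
def rmulAct (c : V) : H →ₗ[F] V →ₗ[F] V :=
  LinearMap.mk₂ F (fun k e => e * (HopfAlgebra.antipode (R := F) k • c))
    (fun k k' e => by simp [map_add, add_smul, mul_add])
    (fun r k e => by simp [map_smul, smul_assoc, mul_smul_comm])
    (fun k e e' => by simp [add_mul])
    (fun r k e => by simp [smul_mul_assoc])

/-- `k ⊗ b ↦ (S(k) • a) * b` -/
def lmulAct (a : V) : H →ₗ[F] V →ₗ[F] V :=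
  LinearMap.mk₂ F (fun k b => (HopfAlgebra.antipode (R := F) k • a) * b)
    (fun k k' b => by simp [map_add, add_smul, add_mul])
    (fun r k b => by simp [map_smul, smul_assoc, smul_mul_assoc])
    (fun k b b' => by simp [mul_add])
    (fun r k b => by simp [mul_smul_comm])

/-- the right product `B ⊗ c ↦ Bc`:
`(f ⊗ g) ⊗ b ↦ (f ⊗ g₍₁₎) ⊗ (b * (S(g₍₂₎) • c))` -/
def Phi (c : V) : (H ⊗[F] H) ⊗[F] V →ₗ[F] (H ⊗[F] H) ⊗[F] V :=
  (TensorProduct.map LinearMap.id (TensorProduct.lift (rmulAct F H V c)))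
    ∘ₗ (TensorProduct.assoc F (H ⊗[F] H) H V).toLinearMap
    ∘ₗ (TensorProduct.map (TensorProduct.assoc F H H H).symm.toLinearMap LinearMap.id)
    ∘ₗ (TensorProduct.map (TensorProduct.map LinearMap.id Coalgebra.comul) LinearMap.id)

/-- the left product `a ⊗ B ↦ aB`:
`(f ⊗ g) ⊗ b ↦ (f₍₁₎ ⊗ g) ⊗ ((S(f₍₂₎) • a) * b)` -/
def PhiL (a : V) : (H ⊗[F] H) ⊗[F] V →ₗ[F] (H ⊗[F] H) ⊗[F] V :=
  (TensorProduct.map LinearMap.id (TensorProduct.lift (lmulAct F H V a)))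
    ∘ₗ (TensorProduct.tensorTensorTensorComm F H H H V).toLinearMap
    ∘ₗ (TensorProduct.assoc F (H ⊗[F] H) H V).toLinearMap
    ∘ₗ (TensorProduct.map (TensorProduct.map Coalgebra.comul LinearMap.id) LinearMap.id)

/-!
Since the parity `p` is an arbitrary function on all of `V` and supercommutativity is imposed
on every pair, one parity class spans `V`; hence there is a single sign `s = ±1` with
`xy = s yx` and `[y ∗ x] = -s σ[x ∗ y]` for all `x, y`. Then the left product is the right
product conjugated by the flip, `aX = s σ(σ(X) a)`. Both `σ` and `X ↦ Xc` descend to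
`(H ⊗ H) ⊗_H V`: the flip by cocommutativity, the right product because `h(ab) = (h₁a)(h₂b)`,
`S(gh) = S(h)S(g)` and `h₁ S(h₂) = ε(h)`. Finally
`[ab ∗ c] = -s σ[c ∗ ab] = -σ[c ∗ ba] = -σ([c ∗ b]a + (-1)^{p(a)p(b)} [c ∗ a]b)`,
and moving `σ` inside with skewsymmetry turns this into `a[b ∗ c] + (-1)^{p(a)p(b)} b[a ∗ c]`.
-/

open Coalgebra HopfAlgebra

theorem Submodule.eq_top_or_eq_top_of_forall_mem_or_mem {R V : Type*} [Ring R] [AddCommGroup V]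
    [Module R V] {S T : Submodule R V} (h : ∀ x, x ∈ S ∨ x ∈ T) : S = ⊤ ∨ T = ⊤ := by
  by_contra! hne
  obtain ⟨u, hu⟩ := SetLike.exists_not_mem_of_ne_top S hne.1
  obtain ⟨w, hw⟩ := SetLike.exists_not_mem_of_ne_top T hne.2
  have huT := (h u).resolve_left hu
  have hwS := (h w).resolve_right hw
  rcases h (u + w) with hS | hT
  · exact hu (by simpa using S.sub_mem hS hwS)
  · exact hw (by simpa using T.sub_mem hT huT)

theorem exists_span_setOf_eq_eq_top {R V : Type*} [Ring R] [AddCommGroup V] [Module R V]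
    (p : V → ZMod 2) : ∃ q : ZMod 2, Submodule.span R {x | p x = q} = ⊤ := by
  have hcover : ∀ x,
      x ∈ Submodule.span R {y | p y = 0} ∨ x ∈ Submodule.span R {y | p y = 1} := by
    intro x
    rcases (by decide : ∀ t : ZMod 2, t = 0 ∨ t = 1) (p x) with hx | hx
    exacts [.inl (Submodule.subset_span hx), .inr (Submodule.subset_span hx)]
  rcases Submodule.eq_top_or_eq_top_of_forall_mem_or_mem hcover with h | h
  exacts [⟨0, h⟩, ⟨1, h⟩]

theorem eq_neg_one_pow_smul_of_span_setOf_eq_eq_top {R V N : Type*} [CommRing R]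
    [AddCommGroup V] [Module R V] [AddCommGroup N] [Module R N] {p : V → ZMod 2} {q : ZMod 2}
    (hq : Submodule.span R {x | p x = q} = ⊤) {L L' : V →ₗ[R] V →ₗ[R] N}
    (h : ∀ x y, L x y = (-1 : R) ^ (p x * p y).val • L' x y) (x y : V) :
    L x y = (-1 : R) ^ q.val • L' x y := by
  have hqq : q * q = q := by fin_cases q <;> rfl
  suffices L = (-1 : R) ^ q.val • L' from LinearMap.congr_fun₂ this x y
  refine LinearMap.ext_on hq fun x (hx : p x = q) ↦ LinearMap.ext_on hq fun y (hy : p y = q) ↦ ?_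
  simp [h, hx, hy, hqq]

theorem sum_sum_tmul_mul_antipode {R A : Type*} [CommSemiring R] [Semiring A] [HopfAlgebra R A]
    {a : A} {ι : Type*} {κ : ι → Type*} (r : Repr R a ι) (r₁ : ∀ i, Repr R (r.left i) (κ i)) :
    ∑ i ∈ r.index, ∑ k ∈ (r₁ i).index,
      (r₁ i).left k ⊗ₜ[R] ((r₁ i).right k * antipode R (r.right i)) = a ⊗ₜ[R] 1 := by
  have hcoassoc := congr((LinearMap.mul' R A ∘ₗ LinearMap.lTensor A (antipode R)).lTensor A
    $(sum_tmul_tmul_eq r r₁ fun i ↦ ℛ R (r.right i)))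
  simp only [map_sum, LinearMap.lTensor_tmul, LinearMap.comp_apply, LinearMap.mul'_apply,
    ← TensorProduct.tmul_sum, sum_mul_antipode_eq_algebraMap_counit] at hcoassoc
  have hcounit := congr((Algebra.linearMap R A).lTensor A $(sum_tmul_counit_eq r))
  simp only [map_sum, LinearMap.lTensor_tmul, Algebra.linearMap_apply, map_one] at hcounit
  rw [hcoassoc, hcounit]

section Flip

variable (R A M : Type*) [CommSemiring R] [AddCommMonoid A] [Module R A] [AddCommMonoid M]
  [Module R M]

/-- The map `σ ⊗ id` of the skewsymmetry axiom, on representatives. -/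
def flipTensor : (A ⊗[R] A) ⊗[R] M →ₗ[R] (A ⊗[R] A) ⊗[R] M :=
  TensorProduct.map (TensorProduct.comm R A A).toLinearMap LinearMap.id

variable {R A M}

theorem flipTensor_flipTensor (x : (A ⊗[R] A) ⊗[R] M) :
    flipTensor R A M (flipTensor R A M x) = x := by
  rw [← LinearMap.comp_apply, ← LinearMap.id_apply (R := R) x]
  congr 1
  exact TensorProduct.ext_threefold fun _ _ _ ↦ rfl

end Flip

section Pseudoalgebra

variable {K A M : Type*} [Field K] [Ring A] [HopfAlgebra K A] [NonUnitalRing M] [Module K M]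
  [Module A M]

theorem mkQ_mul_comul_tmul (w : A ⊗[K] A) (h : A) (v : M) :
    (relSub K A M).mkQ ((w * comul h) ⊗ₜ v) = (relSub K A M).mkQ (w ⊗ₜ (h • v)) :=
  (Submodule.Quotient.eq _).mpr (Submodule.subset_span ⟨w, h, v, rfl⟩)

theorem relSub_le_comap_flipTensor
    (hcc : ∀ h : A, TensorProduct.comm K A A (comul h) = comul h) :
    relSub K A M ≤ (relSub K A M).comap (flipTensor K A M) := by
  refine Submodule.span_le.mpr ?_
  rintro _ ⟨w, h, v, rfl⟩
  refine Submodule.subset_span ⟨TensorProduct.comm K A A w, h, v, ?_⟩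
  rw [map_sub, flipTensor, map_tmul, map_tmul, LinearEquiv.coe_coe, LinearMap.id_apply,
    LinearMap.id_apply]
  congr 2
  exact (map_mul (Algebra.TensorProduct.comm K A A) w (comul h)).trans (congrArg _ (hcc h))

variable [IsScalarTower K A M] [IsScalarTower K M M] [SMulCommClass K M M]

variable (K A M) in
/-- `h • (a * b) = (h₍₁₎ • a) * (h₍₂₎ • b)`. -/
def IsModuleAlgebra : Prop :=
  ∀ (h : A) (a b : M),
    h • (a * b)
      = (LinearMap.mul' K M)
          ((TensorProduct.map (TensorProduct.lift (hAct K A M)) (TensorProduct.lift (hAct K A M)))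
            ((TensorProduct.tensorTensorTensorComm K A A M M) (comul h ⊗ₜ[K] (a ⊗ₜ[K] b))))

theorem IsModuleAlgebra.smul_mul_eq_sum (hM : IsModuleAlgebra K A M) (h : A) (x y : M)
    {ι : Type*} (r : Repr K h ι) :
    h • (x * y) = ∑ i ∈ r.index, (r.left i • x) * (r.right i • y) := by
  simp [hM h x y, ← r.eq, TensorProduct.sum_tmul, map_sum, hAct]

theorem IsModuleAlgebra.sum_smul_mul_antipode_smul (hM : IsModuleAlgebra K A M) (h : A)
    (u x : M) {ι : Type*} (r : Repr K h ι) :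
    ∑ i ∈ r.index, r.left i • (u * (antipode K (r.right i) • x)) = (h • u) * x := by
  have key := congr(TensorProduct.lift ((LinearMap.mul K M).compl₁₂ ((hAct K A M).flip u)
    ((hAct K A M).flip x)) $(sum_sum_tmul_mul_antipode r fun i ↦ ℛ K (r.left i)))
  simp only [map_sum, lift.tmul, LinearMap.compl₁₂_apply, LinearMap.flip_apply,
    LinearMap.mul_apply', hAct, LinearMap.mk₂_apply, one_smul] at key
  rw [← key]
  refine Finset.sum_congr rfl fun i _ ↦ ?_
  simp only [hM.smul_mul_eq_sum _ _ _ (ℛ K (r.left i)), mul_smul]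

theorem Phi_tmul (c : M) (f g : A) (u : M) {ι : Type*} (r : Repr K g ι) :
    Phi K A M c ((f ⊗ₜ g) ⊗ₜ u)
      = ∑ j ∈ r.index, (f ⊗ₜ r.left j) ⊗ₜ (u * (antipode K (r.right j) • c)) := by
  simp [Phi, ← r.eq, tmul_sum, sum_tmul, rmulAct]

theorem PhiL_tmul (a : M) (f g : A) (e : M) {ι : Type*} (r : Repr K f ι) :
    PhiL K A M a ((f ⊗ₜ g) ⊗ₜ e)
      = ∑ i ∈ r.index, (r.left i ⊗ₜ g) ⊗ₜ ((antipode K (r.right i) • a) * e) := by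
  simp [PhiL, ← r.eq, sum_tmul, lmulAct]

theorem IsModuleAlgebra.sum_sum_mkQ_mul_tmul_mul_antipode_smul (hM : IsModuleAlgebra K A M)
    (f g h : A) (u c : M) {ι : Type*} {κ : ι → Type*} (r : Repr K h ι)
    (r₂ : ∀ i, Repr K (r.right i) (κ i)) :
    ∑ i ∈ r.index, ∑ k ∈ (r₂ i).index, (relSub K A M).mkQ
        (((f * r.left i) ⊗ₜ (g * (r₂ i).left k)) ⊗ₜ (u * (antipode K ((r₂ i).right k) • c)))
      = (relSub K A M).mkQ ((f ⊗ₜ g) ⊗ₜ ((h • u) * c)) := by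
  -- Coassociativity rewrites the left side as `∑ ((f ⊗ g) Δ(h₁)) ⊗ u (S(h₂) c)`, on which the
  -- balancing relation and `sum_smul_mul_antipode_smul` act.
  have hcoassoc := congr((TensorProduct.map
      (TensorProduct.map (LinearMap.mulLeft K f) (LinearMap.mulLeft K g))
      ((rmulAct K A M c).flip u) ∘ₗ (TensorProduct.assoc K A A A).symm.toLinearMap)
    $(sum_tmul_tmul_eq r (fun i ↦ ℛ K (r.left i)) r₂))
  have hcomul : ∀ (x : A) (v : M), ∑ k ∈ (ℛ K x).index,
      ((f * (ℛ K x).left k) ⊗ₜ[K] (g * (ℛ K x).right k)) ⊗ₜ[K] v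
        = ((f ⊗ₜ g) * comul x) ⊗ₜ v := by
    intro x v
    simp only [← (ℛ K x).eq, Finset.mul_sum, Algebra.TensorProduct.tmul_mul_tmul, sum_tmul]
  simp only [map_sum, LinearMap.comp_apply, LinearEquiv.coe_coe, assoc_symm_tmul, map_tmul,
    LinearMap.mulLeft_apply, LinearMap.flip_apply, rmulAct, LinearMap.mk₂_apply, hcomul]
    at hcoassoc
  calc _ = (relSub K A M).mkQ (∑ i ∈ r.index, ∑ k ∈ (r₂ i).index, ((f * r.left i) ⊗ₜ
          (g * (r₂ i).left k)) ⊗ₜ (u * (antipode K ((r₂ i).right k) • c))) := by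
        simp only [map_sum]
    _ = ∑ i ∈ r.index, (relSub K A M).mkQ
          ((f ⊗ₜ g) ⊗ₜ (r.left i • (u * (antipode K (r.right i) • c)))) := by
        simp only [← hcoassoc, map_sum, mkQ_mul_comul_tmul]
    _ = _ := by rw [← map_sum, ← tmul_sum, hM.sum_smul_mul_antipode_smul]

theorem IsModuleAlgebra.mkQ_Phi_mul_comul_tmul (hM : IsModuleAlgebra K A M) (c : M)
    (f g h : A) (u : M) :
    (relSub K A M).mkQ (Phi K A M c (((f ⊗ₜ g) * comul h) ⊗ₜ u))
      = (relSub K A M).mkQ (Phi K A M c ((f ⊗ₜ g) ⊗ₜ (h • u))) := by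
  set rh := ℛ K h
  set rg := ℛ K g
  calc _ = ∑ i ∈ rh.index, (relSub K A M).mkQ
          (Phi K A M c (((f * rh.left i) ⊗ₜ (g * rh.right i)) ⊗ₜ u)) := by
        rw [← rh.eq]
        simp only [Finset.mul_sum, Algebra.TensorProduct.tmul_mul_tmul, sum_tmul, map_sum]
    _ = ∑ i ∈ rh.index, ∑ j ∈ rg.index, ∑ k ∈ (ℛ K (rh.right i)).index, (relSub K A M).mkQ
          (((f * rh.left i) ⊗ₜ (rg.left j * (ℛ K (rh.right i)).left k)) ⊗ₜ
            (u * (antipode K ((ℛ K (rh.right i)).right k) • antipode K (rg.right j) • c))) := by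
        refine Finset.sum_congr rfl fun i _ ↦ ?_
        simp only [Phi_tmul _ _ _ _ (rg.mul (ℛ K (rh.right i))), Repr.mul_index, Repr.mul_left,
          Repr.mul_right, Finset.sum_product, antipode_mul_antidistrib, mul_smul, map_sum]
    _ = ∑ j ∈ rg.index, ∑ i ∈ rh.index, ∑ k ∈ (ℛ K (rh.right i)).index, (relSub K A M).mkQ
          (((f * rh.left i) ⊗ₜ (rg.left j * (ℛ K (rh.right i)).left k)) ⊗ₜ
            (u * (antipode K ((ℛ K (rh.right i)).right k) • antipode K (rg.right j) • c))) :=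
        Finset.sum_comm
    _ = _ := by
        simp only [hM.sum_sum_mkQ_mul_tmul_mul_antipode_smul, Phi_tmul _ _ _ _ rg, map_sum]

theorem IsModuleAlgebra.relSub_le_comap_Phi (hM : IsModuleAlgebra K A M) (c : M) :
    relSub K A M ≤ (relSub K A M).comap (Phi K A M c) := by
  refine Submodule.span_le.mpr ?_
  rintro _ ⟨w, h, v, rfl⟩
  rw [SetLike.mem_coe, Submodule.mem_comap, map_sub, ← Submodule.Quotient.eq]
  induction w using TensorProduct.induction_on with
  | zero => simp
  | tmul f g => exact hM.mkQ_Phi_mul_comul_tmul c f g h v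
  | add w₁ w₂ h₁ h₂ => simp only [add_mul, add_tmul, map_add, Submodule.Quotient.mk_add, h₁, h₂]

theorem PhiL_eq_smul_flipTensor_comp_Phi_comp_flipTensor {s : K}
    (hcomm : ∀ x y : M, x * y = s • (y * x)) (a : M) :
    PhiL K A M a = s • (flipTensor K A M ∘ₗ Phi K A M a ∘ₗ flipTensor K A M) := by
  refine TensorProduct.ext_threefold fun f g e ↦ ?_
  simp [flipTensor, PhiL_tmul _ _ _ _ (ℛ K f), Phi_tmul _ _ _ _ (ℛ K f), hcomm _ e,
    Finset.smul_sum, tmul_smul]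

theorem IsModuleAlgebra.mkQ_right_leibniz (hM : IsModuleAlgebra K A M)
    (hcc : ∀ h : A, TensorProduct.comm K A A (comul h) = comul h)
    (β : M →ₗ[K] M →ₗ[K] (A ⊗[K] A) ⊗[K] M) {s : K} (hs : s * s = 1)
    (hcomm : ∀ x y : M, x * y = s • (y * x))
    (hskew : ∀ x y, (relSub K A M).mkQ (β y x)
      = s • -(relSub K A M).mkQ (flipTensor K A M (β x y)))
    (ε : K) (a b c : M)
    (hleib : (relSub K A M).mkQ (β c (b * a))
      = (relSub K A M).mkQ (Phi K A M a (β c b) + ε • Phi K A M b (β c a))) :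
    (relSub K A M).mkQ (β (a * b) c)
      = (relSub K A M).mkQ (PhiL K A M a (β b c) + ε • PhiL K A M b (β a c)) := by
  set π := (relSub K A M).mkQ
  set σ := (relSub K A M).mapQ (relSub K A M) _ (relSub_le_comap_flipTensor hcc)
  set Φ := fun x ↦ (relSub K A M).mapQ (relSub K A M) _ (hM.relSub_le_comap_Phi x)
  have hπσ : ∀ x, π (flipTensor K A M x) = σ (π x) := fun _ ↦ rfl
  have hπΦ : ∀ x y, π (Phi K A M x y) = Φ x (π y) := fun _ _ ↦ rfl
  have hσ_bracket : ∀ x y, σ (π (β x y)) = s • -π (β y x) := by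
    intro x y
    rw [hskew y x, map_smul, map_neg, ← hπσ, flipTensor_flipTensor]
  calc π (β (a * b) c) = s • -σ (π (β c (a * b))) := by rw [hskew, hπσ]
    _ = -σ (π (β c (b * a))) := by rw [hcomm b a, map_smul, map_smul, map_smul, smul_neg]
    _ = -σ (Φ a (π (β c b)) + ε • Φ b (π (β c a))) := by rw [hleib, map_add, map_smul, hπΦ, hπΦ]
    _ = _ := by
      simp only [PhiL_eq_smul_flipTensor_comp_Phi_comp_flipTensor hcomm, map_add, map_smul,
        LinearMap.smul_apply, LinearMap.comp_apply, hπσ, hπΦ, hσ_bracket, map_neg, smul_smul,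
        mul_assoc, hs, mul_one, one_smul, smul_neg, neg_add]

end Pseudoalgebra

theorem stmt4
    (hcc : ∀ h : H, (TensorProduct.comm F H H) (Coalgebra.comul h) = Coalgebra.comul h)
    (hdiff : ∀ (h : H) (a b : V),
      h • (a * b)
        = (LinearMap.mul' F V)
            ((TensorProduct.map (TensorProduct.lift (hAct F H V))
                (TensorProduct.lift (hAct F H V)))
              ((TensorProduct.tensorTensorTensorComm F H H V V)
                (Coalgebra.comul h ⊗ₜ[F] (a ⊗ₜ[F] b)))))
    -- the parity of (homogeneous) elements of the superspace `V`
    (p : V → ZMod 2)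
    -- supercommutativity of the product
    (hsc : ∀ a b : V, a * b = ((-1 : F) ^ (p a * p b).val) • (b * a))
    -- the pseudobracket, given by representatives
    (β : V →ₗ[F] V →ₗ[F] (H ⊗[F] H) ⊗[F] V)
    -- skewsymmetry: `[b ∗ a] = -(-1)^{p(a)p(b)} (σ ⊗_H id)[a ∗ b]`
    (hskew : ∀ a b : V,
      (relSub F H V).mkQ (β b a)
        = (relSub F H V).mkQ
            (-(((-1 : F) ^ (p a * p b).val) •
              (TensorProduct.map (TensorProduct.comm F H H).toLinearMap LinearMap.id)
                (β a b))))
    -- left Leibniz rule: `[a ∗ bc] = [a ∗ b]c + (-1)^{p(b)p(c)} [a ∗ c]b`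
    (hleib : ∀ a b c : V,
      (relSub F H V).mkQ (β a (b * c))
        = (relSub F H V).mkQ
            (Phi F H V c (β a b)
              + ((-1 : F) ^ (p b * p c).val) • Phi F H V b (β a c))) :
    -- right Leibniz rule: `[ab ∗ c] = a[b ∗ c] + (-1)^{p(a)p(b)} b[a ∗ c]`
    ∀ a b c : V,
      (relSub F H V).mkQ (β (a * b) c)
        = (relSub F H V).mkQ
            (PhiL F H V a (β b c)
              + ((-1 : F) ^ (p a * p b).val) • PhiL F H V b (β a c)) := by
  intro a b c
  obtain ⟨q, hq⟩ := exists_span_setOf_eq_eq_top (R := F) p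
  have hs : (-1 : F) ^ q.val * (-1) ^ q.val = 1 := by
    rw [← mul_pow, neg_one_mul, neg_neg, one_pow]
  have hcomm := eq_neg_one_pow_smul_of_span_setOf_eq_eq_top hq (L := LinearMap.mul F V)
    (L' := (LinearMap.mul F V).flip) hsc
  have hskew_uniform := eq_neg_one_pow_smul_of_span_setOf_eq_eq_top hq
    (L := (β.compr₂ (relSub F H V).mkQ).flip)
    (L' := β.compr₂ (-((relSub F H V).mkQ ∘ₗ flipTensor F H V)))
    fun x y ↦ by simpa [flipTensor, smul_neg] using hskew x y
  refine IsModuleAlgebra.mkQ_right_leibniz hdiff hcc β hs hcomm hskew_uniform _ a b c ?_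
  rw [hleib, mul_comm (p b)]
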